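/- For all real w, z: ∫_{-∞}^{∞} ψ(x,w)·ψ(x,z)·e^{-x²}/(x² + 1/2)² dx = 4·e^{wz/2}·(w²z² - 4wz + 8)·√π, where ψ(x,z) = (2x²z² - 4xz + z² + 4)·e^{xz - z²/4}. In particular, the result depends on w and z only through the product wz. -/

import Mathlib

/-! Since `ψ(x,z) = psiQuot z x · (x² + 1/2) · e^{xz - z²/4}`, the integrand is
`e^{-(w²+z²)/4} · psiQuot w x · psiQuot z x · e^{x(w+z) - x²}`. Up to the Gaussian term
`4(w²z² - 4wz + 8) e^{x(w+z) - x²}` this is the derivative of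
`G(x) = 8((2 - wz)x + w + z)/(x² + 1/2) · e^{x(w+z) - x²}`, which vanishes at `±∞`; so only the
Gaussian integral `e^{(w+z)²/4} √π` survives. -/

open MeasureTheory Filter Real Topology

lemma abs_linear_div_sq_add_half_le (a b x : ℝ) :
    |(a * x + b) / (x ^ 2 + 1 / 2)| ≤ |a| + 2 * |b| := by
  have hden : 0 < x ^ 2 + 1 / 2 := by positivity
  rw [abs_div, abs_of_pos hden, div_le_iff₀ hden]
  have hx : |x| ≤ x ^ 2 + 1 / 2 := by nlinarith [sq_nonneg (|x| - 1 / 2), sq_abs x]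
  calc |a * x + b| ≤ |a| * |x| + |b| := (abs_add_le _ _).trans_eq (by rw [abs_mul])
    _ ≤ |a| * (x ^ 2 + 1 / 2) + 2 * |b| * (x ^ 2 + 1 / 2) := by
        gcongr
        nlinarith [abs_nonneg b, sq_nonneg x]
    _ = (|a| + 2 * |b|) * (x ^ 2 + 1 / 2) := by ring

lemma exp_mul_sub_sq_eq (s x : ℝ) :
    exp (x * s - x ^ 2) = exp (s ^ 2 / 4) * exp (-1 * (x - s / 2) ^ 2) := by
  rw [← exp_add]; ring_nf

lemma integrable_exp_mul_sub_sq (s : ℝ) : Integrable fun x : ℝ => exp (x * s - x ^ 2) := by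
  simp_rw [exp_mul_sub_sq_eq s]
  exact ((integrable_exp_neg_mul_sq one_pos).comp_sub_right (s / 2)).const_mul _

lemma integral_exp_mul_sub_sq (s : ℝ) :
    ∫ x : ℝ, exp (x * s - x ^ 2) = exp (s ^ 2 / 4) * √π := by
  simp_rw [exp_mul_sub_sq_eq s]
  rw [integral_const_mul, integral_sub_right_eq_self (fun x => exp (-1 * x ^ 2)),
    integral_gaussian, div_one]

lemma tendsto_exp_mul_sub_sq_cocompact (s : ℝ) :
    Tendsto (fun x : ℝ => exp (x * s - x ^ 2)) (cocompact ℝ) (𝓝 0) := by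
  refine tendsto_exp_atBot.comp (tendsto_atBot_mono (fun x => ?_)
    (tendsto_atBot_add_const_left _ (s ^ 2 / 2) (tendsto_neg_atTop_atBot.comp
      (((tendsto_pow_atTop two_ne_zero).comp tendsto_norm_cocompact_atTop).atTop_div_const
        two_pos))))
  simp only [Function.comp_apply, norm_eq_abs, sq_abs]
  nlinarith [sq_nonneg (x - s)]

lemma tendsto_linear_div_mul_exp_mul_sub_sq_cocompact (a b s : ℝ) :
    Tendsto (fun x : ℝ => (a * x + b) / (x ^ 2 + 1 / 2) * exp (x * s - x ^ 2))
      (cocompact ℝ) (𝓝 0) :=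
  isBoundedUnder_le_mul_tendsto_zero
    (isBoundedUnder_of ⟨|a| + 2 * |b|, fun x => abs_linear_div_sq_add_half_le a b x⟩)
    (tendsto_exp_mul_sub_sq_cocompact s)

/-- `(2x²z² - 4xz + z² + 4) / (x² + 1/2)`, written so that it is visibly bounded in `x`. -/
noncomputable def psiQuot (z x : ℝ) : ℝ := 2 * z ^ 2 + 4 * ((-z * x + 1) / (x ^ 2 + 1 / 2))

lemma psiQuot_mul_sq_add_half (z x : ℝ) :
    psiQuot z x * (x ^ 2 + 1 / 2) = 2 * x ^ 2 * z ^ 2 - 4 * x * z + z ^ 2 + 4 := by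
  have : x ^ 2 + 1 / 2 ≠ 0 := by positivity
  rw [psiQuot]; field_simp; ring

lemma abs_psiQuot_le (z x : ℝ) : |psiQuot z x| ≤ 2 * z ^ 2 + 4 * (|z| + 2) := by
  have h := abs_linear_div_sq_add_half_le (-z) 1 x
  rw [abs_neg, abs_one, mul_one] at h
  calc |psiQuot z x| ≤ |2 * z ^ 2| + |4 * ((-z * x + 1) / (x ^ 2 + 1 / 2))| := abs_add_le _ _
    _ ≤ 2 * z ^ 2 + 4 * (|z| + 2) := by
        rw [abs_mul, abs_mul, abs_two, abs_of_nonneg (sq_nonneg z), abs_of_pos four_pos]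
        gcongr

lemma continuous_psiQuot (z : ℝ) : Continuous (psiQuot z) := by
  unfold psiQuot
  exact continuous_const.add (continuous_const.mul
    ((by fun_prop : Continuous _).div (by fun_prop) fun x => by positivity))

lemma hasDerivAt_potential (w z x : ℝ) :
    HasDerivAt
      (fun t => (8 * (2 - w * z) * t + 8 * (w + z)) / (t ^ 2 + 1 / 2) * exp (t * (w + z) - t ^ 2))
      (psiQuot w x * psiQuot z x * exp (x * (w + z) - x ^ 2)
        - 4 * (w ^ 2 * z ^ 2 - 4 * w * z + 8) * exp (x * (w + z) - x ^ 2)) x := by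
  have hden : x ^ 2 + 1 / 2 ≠ 0 := by positivity
  have hlin : HasDerivAt (fun t => 8 * (2 - w * z) * t + 8 * (w + z)) (8 * (2 - w * z)) x := by
    simpa using ((hasDerivAt_id x).const_mul (8 * (2 - w * z))).add_const (8 * (w + z))
  have hsq : HasDerivAt (fun t => t ^ 2 + 1 / 2) (2 * x) x := by
    simpa using (hasDerivAt_pow 2 x).add_const (1 / 2 : ℝ)
  have hexp : HasDerivAt (fun t => exp (t * (w + z) - t ^ 2))
      (exp (x * (w + z) - x ^ 2) * (w + z - 2 * x)) x := by
    simpa using (((hasDerivAt_id x).mul_const (w + z)).sub (hasDerivAt_pow 2 x)).exp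
  refine ((hlin.div hsq hden).mul hexp).congr_deriv ?_
  simp only [psiQuot, Pi.div_apply]
  field_simp
  ring

lemma integral_psiQuot_mul_psiQuot_mul_exp (w z : ℝ) :
    ∫ x, psiQuot w x * psiQuot z x * exp (x * (w + z) - x ^ 2) =
      4 * (w ^ 2 * z ^ 2 - 4 * w * z + 8) * (exp ((w + z) ^ 2 / 4) * √π) := by
  have hE := integrable_exp_mul_sub_sq (w + z)
  have hint : Integrable fun x => psiQuot w x * psiQuot z x * exp (x * (w + z) - x ^ 2) :=
    hE.bdd_mul ((continuous_psiQuot w).mul (continuous_psiQuot z)).aestronglyMeasurable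
      (ae_of_all _ fun x => by
        rw [norm_mul, norm_eq_abs, norm_eq_abs]
        exact mul_le_mul (abs_psiQuot_le w x) (abs_psiQuot_le z x) (abs_nonneg _)
          (by positivity))
  have hF := tendsto_linear_div_mul_exp_mul_sub_sq_cocompact (8 * (2 - w * z)) (8 * (w + z)) (w + z)
  have hzero := integral_of_hasDerivAt_of_tendsto (hasDerivAt_potential w z)
    (hint.sub (hE.const_mul _)) (hF.mono_left atBot_le_cocompact) (hF.mono_left atTop_le_cocompact)
  rw [integral_sub hint (hE.const_mul _), integral_const_mul, integral_exp_mul_sub_sq] at hzero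
  linarith

/-- `∫ ψ(x,w) ψ(x,z) e^{-x²}/(x²+1/2)² dx = 4 e^{wz/2} (w²z² - 4wz + 8) √π`
with `ψ(x,z) = (2x²z² - 4xz + z² + 4) e^{xz - z²/4}`. -/
theorem stmt_12 (w z : ℝ) (ψ : ℝ → ℝ → ℝ)
    (hψ : ∀ x z : ℝ, ψ x z = (2 * x ^ 2 * z ^ 2 - 4 * x * z + z ^ 2 + 4) *
      Real.exp (x * z - z ^ 2 / 4)) :
    ∫ x : ℝ, ψ x w * ψ x z * Real.exp (-x ^ 2) / (x ^ 2 + 1 / 2) ^ 2 =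
      4 * Real.exp (w * z / 2) * (w ^ 2 * z ^ 2 - 4 * w * z + 8) * Real.sqrt Real.pi := by
  have hintegrand : ∀ x, ψ x w * ψ x z * exp (-x ^ 2) / (x ^ 2 + 1 / 2) ^ 2 =
      exp (-(w ^ 2 + z ^ 2) / 4) * (psiQuot w x * psiQuot z x * exp (x * (w + z) - x ^ 2)) := by
    intro x
    have hden : x ^ 2 + 1 / 2 ≠ 0 := by positivity
    have hexp : exp (x * w - w ^ 2 / 4) * exp (x * z - z ^ 2 / 4) * exp (-x ^ 2) =
        exp (-(w ^ 2 + z ^ 2) / 4) * exp (x * (w + z) - x ^ 2) := by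
      simp only [← exp_add]; ring_nf
    rw [hψ, hψ, ← psiQuot_mul_sq_add_half w, ← psiQuot_mul_sq_add_half z, div_eq_iff (pow_ne_zero 2 hden)]
    linear_combination (psiQuot w x * psiQuot z x * (x ^ 2 + 1 / 2) ^ 2) * hexp
  simp_rw [hintegrand]
  have hexp : exp (-(w ^ 2 + z ^ 2) / 4) * exp ((w + z) ^ 2 / 4) = exp (w * z / 2) := by
    rw [← exp_add]; ring_nf
  rw [integral_const_mul, integral_psiQuot_mul_psiQuot_mul_exp]
  linear_combination (4 * (w ^ 2 * z ^ 2 - 4 * w * z + 8) * √π) * hexp
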